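/- Fix d ≥ 1. Let Q↑d = {(a₁,…,a_d) ∈ ℚ^d : a₁ < … < a_d}, equipped with the d binary relations <₁,…,<_d given by ā <_i b̄ iff a_i < b_i. Let I₁,…,I_d be intervals of ℚ, each containing at least two elements, such that every element of I_i is less than every element of I_j whenever i < j (so the product I₁×…×I_d is contained in Q↑d). Let ≺ be a strict linear order on Q↑d that is first-order definable without parameters in the structure (Q↑d; <₁,…,<_d). Then there exists k ∈ {1,…,d} such that either for all ā, b̄ ∈ I₁×…×I_d, a_k < b_k implies ā ≺ b̄, or for all ā, b̄ ∈ I₁×…×I_d, a_k < b_k implies b̄ ≺ ā. -/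

import Mathlib

open FirstOrder FirstOrder.Language

/-- The set of strictly increasing d-tuples of rationals. -/
abbrev QUp (d : ℕ) : Type := {v : Fin d → ℚ // StrictMono v}

/-- The relation symbols: for each coordinate `i`, one binary symbol `<_i`. -/
def CoordRels (d : ℕ) : ℕ → Type
  | 2 => Fin d
  | _ => Empty

/-- The language with the `d` binary relation symbols `<₁, …, <_d`. -/
def CoordLang (d : ℕ) : FirstOrder.Language := ⟨fun _ => Empty, CoordRels d⟩

/-- Interpretation of the binary relation symbols: `u <_i v` iff `u i < v i`. -/
def coordBinary {d : ℕ} (r : Fin d) (v : Fin 2 → QUp d) : Prop :=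
  (v 0).1 r < (v 1).1 r

/-- The interpretation of the relation symbols on `QUp d`. -/
def coordRelInterp (d : ℕ) : ∀ n, CoordRels d n → (Fin n → QUp d) → Prop
  | 0, r, _ => r.elim
  | 1, r, _ => r.elim
  | 2, r, v => coordBinary r v
  | (_ + 3), r, _ => r.elim

/-- The structure `(Q↑d; <₁, …, <_d)`. -/
instance (d : ℕ) : (CoordLang d).Structure (QUp d) where
  funMap := fun f _ => f.elim
  RelMap := fun {n} r v => coordRelInterp d n r v

/-!
A parameter-free definable relation is invariant under the diagonal action of `Aut(ℚ, <)` on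
`Q↑d`. Since the intervals are ordered, two pairs of points of the box whose coordinates compare
in the same way are conjugate under this action (ℚ is ultrahomogeneous), so on pairs without
equal coordinates `≺` only depends on the sign pattern `σ : Fin d → Bool` recording where
`a_i < b_i`. Asymmetry and totality say that exactly one of `σ`, `σᶜ` is `≺`-increasing, and
transitivity, applied to three points realising `σ`, `τ` and any `ρ` that agrees with `σ`
wherever `σ` and `τ` agree, says that these patterns form an ultrafilter-like family. On the
finite set of coordinates it is principal: one coordinate `k` decides. Finally, any two points
with `a_k < b_k` are linked through a third point `c` with no coordinate in common with either.
-/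

theorem exists_orderIso_apply_eq_of_lt_iff {α ι : Type*} [LinearOrder α] [Countable α]
    [DenselyOrdered α] [NoMinOrder α] [NoMaxOrder α] [Nonempty α] [Finite ι] {u v : ι → α}
    (h : ∀ i j, u i < u j ↔ v i < v j) : ∃ f : α ≃o α, ∀ i, f (u i) = v i := by
  have hv : ∀ {i j}, u i = u j → v i = v j := fun {i j} hij =>
    le_antisymm (not_lt.1 fun hlt => hij.not_gt ((h j i).2 hlt))
      (not_lt.1 fun hlt => hij.not_lt ((h i j).2 hlt))
  let := orderStructure α
  have : Language.order.OrderedStructure α := ⟨fun _ => Iff.rfl⟩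
  let S := Substructure.closure Language.order (Set.range u)
  have hS : ∀ x, x ∈ S ↔ ∃ i, u i = x :=
    Substructure.mem_closure_iff_of_isRelational Language.order (Set.range u)
  have : Finite S := .of_surjective (fun i => ⟨u i, (hS _).2 ⟨i, rfl⟩⟩) fun x => by
    obtain ⟨i, hi⟩ := (hS x).1 x.2
    exact ⟨i, Subtype.ext hi⟩
  let idx : S → ι := fun x => ((hS x).1 x.2).choose
  have hidx : ∀ x, u (idx x) = x := fun x => ((hS x).1 x.2).choose_spec
  let g : S ↪o α := OrderEmbedding.ofStrictMono (fun x => v (idx x)) fun x y hxy =>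
    (h _ _).1 (by rwa [hidx, hidx])
  obtain ⟨f, hf⟩ := (isFraisseLimit_of_countable_nonempty_dlo α).ultrahomogeneous S
    Substructure.FG.of_finite (StrongHomClass.toEmbedding g)
  let := StrongHomClass.toOrderIsoClass Language.order α α (α ≃[Language.order] α)
  refine ⟨f, fun i => ?_⟩
  have hfi := DFunLike.congr_fun hf ⟨u i, (hS _).2 ⟨i, rfl⟩⟩
  exact hfi.symm.trans (hv (hidx _))

namespace QUp

variable {d : ℕ}

def map (f : ℚ ≃o ℚ) : QUp d ≃[CoordLang d] QUp d where
  toFun a := ⟨f ∘ a.1, f.strictMono.comp a.2⟩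
  invFun a := ⟨f.symm ∘ a.1, f.symm.strictMono.comp a.2⟩
  left_inv a := by ext; simp
  right_inv a := by ext; simp
  map_fun' F := F.elim
  map_rel' {n} r x := by
    match n, r with
    | 2, r => exact f.lt_iff_lt

end QUp

theorem FirstOrder.Language.Formula.realize_pair_equiv {L : Language} {M : Type*} [L.Structure M]
    (φ : L.Formula (Fin 2)) (g : M ≃[L] M) (a b : M) :
    φ.Realize ![g a, g b] ↔ φ.Realize ![a, b] := by
  have : ![g a, g b] = g ∘ ![a, b] := by ext i; fin_cases i <;> rfl
  rw [this, StrongHomClass.realize_formula]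

section Box

variable {d : ℕ} {I : Fin d → Set ℚ}

theorem strictMono_of_mem_box (hsep : ∀ i j : Fin d, i < j → ∀ x ∈ I i, ∀ y ∈ I j, x < y)
    {c : Fin d → ℚ} (hc : ∀ i, c i ∈ I i) : StrictMono c :=
  fun i j hij => hsep i j hij _ (hc i) _ (hc j)

theorem QUp.exists_map_eq_of_cmp_eq {n : ℕ}
    (hsep : ∀ i j : Fin d, i < j → ∀ x ∈ I i, ∀ y ∈ I j, x < y) {v w : Fin n → QUp d}
    (hv : ∀ j i, (v j).1 i ∈ I i) (hw : ∀ j i, (w j).1 i ∈ I i)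
    (hcmp : ∀ j j' i, cmp ((v j).1 i) ((v j').1 i) = cmp ((w j).1 i) ((w j').1 i)) :
    ∃ f : ℚ ≃o ℚ, ∀ j, QUp.map f (v j) = w j := by
  obtain ⟨f, hf⟩ := exists_orderIso_apply_eq_of_lt_iff (u := fun p : Fin n × Fin d => (v p.1).1 p.2)
    (v := fun p => (w p.1).1 p.2) <| by
    rintro ⟨j, i⟩ ⟨j', i'⟩
    rcases lt_trichotomy i i' with h | rfl | h
    · exact iff_of_true (hsep _ _ h _ (hv j i) _ (hv j' i')) (hsep _ _ h _ (hw j i) _ (hw j' i'))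
    · simp only [← cmp_eq_lt_iff, hcmp]
    · exact iff_of_false (hsep _ _ h _ (hv j' i') _ (hv j i)).not_gt
        (hsep _ _ h _ (hw j' i') _ (hw j i)).not_gt
  exact ⟨f, fun j => Subtype.ext <| funext fun i => hf (j, i)⟩

theorem prec_iff_of_cmp_eq (hsep : ∀ i j : Fin d, i < j → ∀ x ∈ I i, ∀ y ∈ I j, x < y)
    {prec : QUp d → QUp d → Prop}
    (hinv : ∀ (f : ℚ ≃o ℚ) a b, prec (QUp.map f a) (QUp.map f b) ↔ prec a b)
    {a b a' b' : QUp d} (ha : ∀ i, a.1 i ∈ I i) (hb : ∀ i, b.1 i ∈ I i)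
    (ha' : ∀ i, a'.1 i ∈ I i) (hb' : ∀ i, b'.1 i ∈ I i)
    (hcmp : ∀ i, cmp (a.1 i) (b.1 i) = cmp (a'.1 i) (b'.1 i)) : prec a b ↔ prec a' b' := by
  have hcmp' : ∀ i, cmp (b.1 i) (a.1 i) = cmp (b'.1 i) (a'.1 i) := fun i => by
    rw [← cmp_swap, hcmp, cmp_swap]
  obtain ⟨f, hf⟩ := QUp.exists_map_eq_of_cmp_eq hsep (v := ![a, b]) (w := ![a', b'])
    (by simp [Fin.forall_fin_two, ha, hb]) (by simp [Fin.forall_fin_two, ha', hb'])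
    (by simp [Fin.forall_fin_two, hcmp, hcmp'])
  rw [← hinv f, show QUp.map f a = a' from hf 0, show QUp.map f b = b' from hf 1]

def SignPattern (σ : Fin d → Bool) (a b : QUp d) : Prop :=
  ∀ i, cmp (a.1 i) (b.1 i) = if σ i then .lt else .gt

theorem SignPattern.swap {σ : Fin d → Bool} {a b : QUp d} (h : SignPattern σ a b) :
    SignPattern σᶜ b a := fun i => by
  rw [← cmp_swap, h i, Pi.compl_apply, Bool.compl_eq_bnot]
  cases σ i <;> rfl

theorem signPattern_decide_lt {a b : QUp d} (h : ∀ i, a.1 i ≠ b.1 i) :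
    SignPattern (fun i => decide (a.1 i < b.1 i)) a b := fun i => by
  rcases (h i).lt_or_gt with hlt | hgt
  · simp [hlt]
  · simp [hgt, hgt.not_gt]

theorem Fin.exists_cmp_three :
    ∀ s t r : Bool, (s = t → r = s) → ∃ x y z : Fin 3,
      cmp x y = (if s then .lt else .gt) ∧ cmp y z = (if t then .lt else .gt) ∧
        cmp x z = (if r then .lt else .gt) := by
  decide

end Box

section Pattern

variable {d : ℕ} {I : Fin d → Set ℚ}

theorem exists_signPattern_triple (hsep : ∀ i j : Fin d, i < j → ∀ x ∈ I i, ∀ y ∈ I j, x < y)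
    (hinf : ∀ i, (I i).Infinite) {σ τ ρ : Fin d → Bool} (h : ∀ i, σ i = τ i → ρ i = σ i) :
    ∃ x y z : QUp d, (∀ i, x.1 i ∈ I i) ∧ (∀ i, y.1 i ∈ I i) ∧ (∀ i, z.1 i ∈ I i) ∧
      SignPattern σ x y ∧ SignPattern τ y z ∧ SignPattern ρ x z := by
  have e : ∀ i, Fin 3 ↪o I i := fun i =>
    have := (hinf i).to_subtype
    (nonempty_orderEmbedding_of_finite_infinite (Fin 3) (I i)).some
  choose X Y Z hXY hYZ hXZ using fun i => Fin.exists_cmp_three _ _ _ (h i)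
  let pt (c : Fin d → Fin 3) : QUp d :=
    ⟨fun i => e i (c i), strictMono_of_mem_box hsep fun i => (e i (c i)).2⟩
  have hcmp : ∀ c c' i, cmp ((pt c).1 i) ((pt c').1 i) = cmp (c i) (c' i) := fun c c' i =>
    ((Subtype.strictMono_coe _).comp (e i).strictMono).cmp_map_eq _ _
  refine ⟨pt X, pt Y, pt Z, fun i => (e i _).2, fun i => (e i _).2, fun i => (e i _).2,
    fun i => ?_, fun i => ?_, fun i => ?_⟩ <;> rw [hcmp]
  exacts [hXY i, hYZ i, hXZ i]

def IsIncreasingPattern (I : Fin d → Set ℚ) (prec : QUp d → QUp d → Prop) (σ : Fin d → Bool) :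
    Prop :=
  ∃ a b : QUp d, (∀ i, a.1 i ∈ I i) ∧ (∀ i, b.1 i ∈ I i) ∧ SignPattern σ a b ∧ prec a b

variable {prec : QUp d → QUp d → Prop}

theorem IsIncreasingPattern.prec_of_signPattern
    (hsep : ∀ i j : Fin d, i < j → ∀ x ∈ I i, ∀ y ∈ I j, x < y)
    (hinv : ∀ (f : ℚ ≃o ℚ) a b, prec (QUp.map f a) (QUp.map f b) ↔ prec a b)
    {σ : Fin d → Bool} (hσ : IsIncreasingPattern I prec σ) {a b : QUp d}
    (ha : ∀ i, a.1 i ∈ I i) (hb : ∀ i, b.1 i ∈ I i) (hab : SignPattern σ a b) : prec a b := by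
  obtain ⟨a', b', ha', hb', hab', hprec⟩ := hσ
  exact (prec_iff_of_cmp_eq hsep hinv ha' hb' ha hb fun i => (hab' i).trans (hab i).symm).1 hprec

theorem isIncreasingPattern_compl_iff [NeZero d] [IsStrictTotalOrder (QUp d) prec]
    (hsep : ∀ i j : Fin d, i < j → ∀ x ∈ I i, ∀ y ∈ I j, x < y)
    (hinf : ∀ i, (I i).Infinite)
    (hinv : ∀ (f : ℚ ≃o ℚ) a b, prec (QUp.map f a) (QUp.map f b) ↔ prec a b)
    (σ : Fin d → Bool) : IsIncreasingPattern I prec σᶜ ↔ ¬ IsIncreasingPattern I prec σ := by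
  constructor
  · rintro hσc ⟨a, b, ha, hb, hab, hprec⟩
    exact asymm_of prec hprec (hσc.prec_of_signPattern hsep hinv hb ha hab.swap)
  · intro hσ
    obtain ⟨a, b, -, ha, hb, -, hab, -, -⟩ :=
      exists_signPattern_triple hsep hinf (σ := σ) (τ := σ) (ρ := σ) fun _ _ => rfl
    have hne : a ≠ b := fun h => by
      have := hab 0
      rw [h, cmp_self_eq_eq] at this
      split_ifs at this
    refine ⟨b, a, hb, ha, hab.swap, ?_⟩
    rcases trichotomous_of prec a b with h | h | h
    · exact absurd ⟨a, b, ha, hb, hab, h⟩ hσ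
    · exact absurd h hne
    · exact h

theorem IsIncreasingPattern.of_agree [IsTrans (QUp d) prec]
    (hsep : ∀ i j : Fin d, i < j → ∀ x ∈ I i, ∀ y ∈ I j, x < y)
    (hinf : ∀ i, (I i).Infinite)
    (hinv : ∀ (f : ℚ ≃o ℚ) a b, prec (QUp.map f a) (QUp.map f b) ↔ prec a b)
    {σ τ ρ : Fin d → Bool} (hσ : IsIncreasingPattern I prec σ) (hτ : IsIncreasingPattern I prec τ)
    (h : ∀ i, σ i = τ i → ρ i = σ i) : IsIncreasingPattern I prec ρ := by
  obtain ⟨x, y, z, hx, hy, hz, hxy, hyz, hxz⟩ := exists_signPattern_triple hsep hinf h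
  exact ⟨x, z, hx, hz, hxz, _root_.trans (hσ.prec_of_signPattern hsep hinv hx hy hxy)
    (hτ.prec_of_signPattern hsep hinv hy hz hyz)⟩

end Pattern

theorem exists_dictator {ι : Type*} [Finite ι] {S : Set (ι → Bool)}
    (hcompl : ∀ σ, σᶜ ∈ S ↔ σ ∉ S)
    (hagree : ∀ σ ∈ S, ∀ τ ∈ S, ∀ ρ, (∀ i, σ i = τ i → ρ i = σ i) → ρ ∈ S) :
    ∃ k b, ∀ σ : ι → Bool, σ k = b → σ ∈ S := by
  classical
  -- The sets on which agreeing with `σ₀` forces membership in `S` form an ultrafilter, which is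
  -- principal since `ι` is finite.
  obtain ⟨σ₀, hσ₀⟩ : ∃ σ₀, σ₀ ∈ S := by
    by_contra! h
    exact h _ ((hcompl ⊤).2 (h ⊤))
  let F : Filter ι :=
    { sets := {A | ∀ ρ : ι → Bool, (∀ i ∈ A, ρ i = σ₀ i) → ρ ∈ S}
      univ_sets := fun ρ hρ => funext (fun i => hρ i trivial) ▸ hσ₀
      sets_of_superset := fun hA hAB ρ hρ => hA ρ fun i hi => hρ i (hAB hi)
      inter_sets := fun {A B} hA hB ρ hρ => by
        refine hagree _ (hA (fun i => if i ∈ A then σ₀ i else ρ i) fun i hi => if_pos hi)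
          _ (hB (fun i => if i ∈ B then σ₀ i else ρ i) fun i hi => if_pos hi) ρ fun i => ?_
        by_cases hiA : i ∈ A <;> by_cases hiB : i ∈ B <;> simp_all }
  have hσ₀c : σ₀ᶜ ∉ S := fun h => (hcompl σ₀).1 h hσ₀
  have hU : ∀ A, Aᶜ ∉ F ↔ A ∈ F := fun A => by
    refine ⟨fun hAc => ?_, fun hA hAc => ?_⟩
    · by_contra hA
      simp only [F, Filter.mem_mk, Set.mem_ofPred_eq, not_forall] at hA hAc
      obtain ⟨ρ₁, hρ₁, hρ₁S⟩ := hA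
      obtain ⟨ρ₂, hρ₂, hρ₂S⟩ := hAc
      refine hσ₀c (hagree _ ((hcompl ρ₁).2 hρ₁S) _ ((hcompl ρ₂).2 hρ₂S) _ fun i h => ?_)
      by_cases hi : i ∈ A <;> simp_all
    · exact hσ₀c (F.inter_sets hA hAc _ fun i hi => (hi.2 hi.1).elim)
  obtain ⟨k, hk⟩ := (Ultrafilter.ofComplNotMemIff F hU).eq_pure_of_finite
  have hkF : {k} ∈ F := by
    change {k} ∈ Ultrafilter.ofComplNotMemIff F hU
    rw [hk]
    exact Ultrafilter.mem_pure.2 rfl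
  exact ⟨k, σ₀ k, fun σ hσ => hkF σ fun i hi => (Set.mem_singleton_iff.1 hi) ▸ hσ⟩

theorem Set.OrdConnected.infinite_of_ne {α : Type*} [LinearOrder α] [DenselyOrdered α]
    {s : Set α} (hs : s.OrdConnected) {x y : α} (hx : x ∈ s) (hy : y ∈ s) (hxy : x ≠ y) :
    s.Infinite := by
  rcases hxy.lt_or_gt with h | h
  · exact (Set.Icc_infinite h).mono (hs.out hx hy)
  · exact (Set.Icc_infinite h).mono (hs.out hy hx)

theorem exists_mem_box_between {d : ℕ} {I : Fin d → Set ℚ}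
    (hsep : ∀ i j : Fin d, i < j → ∀ x ∈ I i, ∀ y ∈ I j, x < y)
    (hint : ∀ i, (I i).OrdConnected) (hinf : ∀ i, (I i).Infinite) {a b : QUp d}
    (ha : ∀ i, a.1 i ∈ I i) (hb : ∀ i, b.1 i ∈ I i) {k : Fin d} (hab : a.1 k < b.1 k) :
    ∃ c : QUp d, (∀ i, c.1 i ∈ I i) ∧ (∀ i, a.1 i ≠ c.1 i) ∧ (∀ i, c.1 i ≠ b.1 i) ∧
      a.1 k < c.1 k ∧ c.1 k < b.1 k := by
  have hc : ∀ i, ∃ x ∈ I i, a.1 i ≠ x ∧ x ≠ b.1 i ∧ (i = k → a.1 k < x ∧ x < b.1 k) := by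
    intro i
    by_cases hik : i = k
    · subst hik
      obtain ⟨x, hax, hxb⟩ := exists_between hab
      exact ⟨x, (hint i).out (ha i) (hb i) ⟨hax.le, hxb.le⟩, hax.ne, hxb.ne, fun _ => ⟨hax, hxb⟩⟩
    · obtain ⟨x, hxI, hxab⟩ := ((hinf i).sdiff (Set.toFinite {a.1 i, b.1 i})).nonempty
      simp only [Set.mem_insert_iff, Set.mem_singleton_iff, not_or] at hxab
      exact ⟨x, hxI, Ne.symm hxab.1, hxab.2, fun h => absurd h hik⟩
  choose c hcI hac hcb hck using hc
  exact ⟨⟨c, strictMono_of_mem_box hsep hcI⟩, hcI, hac, hcb, (hck k rfl).1, (hck k rfl).2⟩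

theorem prec_of_forall_isIncreasingPattern {d : ℕ} {I : Fin d → Set ℚ}
    {prec : QUp d → QUp d → Prop} [IsTrans (QUp d) prec]
    (hsep : ∀ i j : Fin d, i < j → ∀ x ∈ I i, ∀ y ∈ I j, x < y)
    (hint : ∀ i, (I i).OrdConnected) (hinf : ∀ i, (I i).Infinite)
    (hinv : ∀ (f : ℚ ≃o ℚ) a b, prec (QUp.map f a) (QUp.map f b) ↔ prec a b)
    {k : Fin d} {β : Bool} (hk : ∀ σ : Fin d → Bool, σ k = β → IsIncreasingPattern I prec σ)
    {a b : QUp d} (ha : ∀ i, a.1 i ∈ I i) (hb : ∀ i, b.1 i ∈ I i) (hab : a.1 k ≠ b.1 k)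
    (hβ : decide (a.1 k < b.1 k) = β) : prec a b := by
  have hprec : ∀ x y : QUp d, (∀ i, x.1 i ∈ I i) → (∀ i, y.1 i ∈ I i) →
      (∀ i, x.1 i ≠ y.1 i) → decide (x.1 k < y.1 k) = β → prec x y := fun x y hx hy hxy h =>
    (hk _ h).prec_of_signPattern hsep hinv hx hy (signPattern_decide_lt hxy)
  subst hβ
  rcases hab.lt_or_gt with h | h
  · obtain ⟨c, hc, hac, hcb, hak, hkb⟩ := exists_mem_box_between hsep hint hinf ha hb h
    exact _root_.trans (hprec a c ha hc hac (by simp [h, hak]))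
      (hprec c b hc hb hcb (by simp [h, hkb]))
  · obtain ⟨c, hc, hbc, hca, hbk, hka⟩ := exists_mem_box_between hsep hint hinf hb ha h
    exact _root_.trans (hprec a c ha hc (fun i => (hca i).symm) (by simp [h.not_gt, hka.not_gt]))
      (hprec c b hc hb (fun i => (hbc i).symm) (by simp [h.not_gt, hbk.not_gt]))

/-- If `I₁ < ⋯ < I_d` are nondegenerate intervals of ℚ and `≺` is a strict linear order on
`Q↑d` definable without parameters in `(Q↑d; <₁, …, <_d)`, then there is a coordinate `k`
such that on the box `I₁ × ⋯ × I_d`, `a_k < b_k` always implies `ā ≺ b̄`, or `a_k < b_k`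
always implies `b̄ ≺ ā`. -/
theorem definable_order_on_box (d : ℕ) (hd : 1 ≤ d)
    (I : Fin d → Set ℚ)
    (hinterval : ∀ i, (I i).OrdConnected)
    (hnondeg : ∀ i, ∃ x ∈ I i, ∃ y ∈ I i, x ≠ y)
    (hordered : ∀ i j : Fin d, i < j → ∀ x ∈ I i, ∀ y ∈ I j, x < y)
    (prec : QUp d → QUp d → Prop)
    (hirrefl : ∀ a, ¬ prec a a)
    (htrans : ∀ a b c, prec a b → prec b c → prec a c)
    (htotal : ∀ a b, a ≠ b → prec a b ∨ prec b a)
    (hdef : ∃ φ : (CoordLang d).Formula (Fin 2),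
      ∀ a b : QUp d, prec a b ↔ φ.Realize ![a, b]) :
    ∃ k : Fin d,
      (∀ a b : QUp d, (∀ i, a.1 i ∈ I i) → (∀ i, b.1 i ∈ I i) →
        a.1 k < b.1 k → prec a b) ∨
      (∀ a b : QUp d, (∀ i, a.1 i ∈ I i) → (∀ i, b.1 i ∈ I i) →
        a.1 k < b.1 k → prec b a) := by
  have : NeZero d := ⟨by omega⟩
  have : IsStrictTotalOrder (QUp d) prec :=
    { irrefl := hirrefl, trans := htrans
      trichotomous := fun a b hab hba => by_contra fun hne => (htotal a b hne).elim hab hba }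
  obtain ⟨φ, hφ⟩ := hdef
  have hinv : ∀ (f : ℚ ≃o ℚ) a b, prec (QUp.map f a) (QUp.map f b) ↔ prec a b := fun f a b => by
    rw [hφ, hφ, Formula.realize_pair_equiv]
  have hinf : ∀ i, (I i).Infinite := fun i =>
    let ⟨_, hx, _, hy, hxy⟩ := hnondeg i
    (hinterval i).infinite_of_ne hx hy hxy
  obtain ⟨k, β, hk⟩ := exists_dictator (S := {σ | IsIncreasingPattern I prec σ})
    (isIncreasingPattern_compl_iff hordered hinf hinv)
    fun σ hσ τ hτ ρ h => IsIncreasingPattern.of_agree hordered hinf hinv hσ hτ h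
  refine ⟨k, ?_⟩
  cases β
  · exact Or.inr fun a b ha hb hab => prec_of_forall_isIncreasingPattern hordered hinterval hinf
      hinv hk hb ha hab.ne' (by simpa using hab.le)
  · exact Or.inl fun a b ha hb hab => prec_of_forall_isIncreasingPattern hordered hinterval hinf
      hinv hk ha hb hab.ne (by simpa using hab)
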